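/- arXiv:dg-ga/9711004 — 2 statements merged into one kernel-verified Lean document; each statement's English description precedes it below -/
import Mathlib

section
/- Let χ : ℝ⁴ → M_n(ℂ) be a map that is differentiable at a point x ∈ ℝ⁴, and suppose χ(x) is skew-Hermitian, i.e. χ(x)ᴴ = −χ(x). Then the composite map y ↦ exp(χ(y)) is differentiable at x, and its derivative D(exp ∘ χ)(x) satisfies ‖D(exp ∘ χ)(x)‖ ≤ (1 + ‖χ(x)‖) · ‖Dχ(x)‖, where ‖Dχ(x)‖ and ‖D(exp ∘ χ)(x)‖ are operator norms of the Fréchet derivatives and ‖χ(x)‖ is the operator norm of the matrix χ(x). -/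
/-!
If `A` is skew-adjoint, every `exp (s • A)` is unitary, so multiplying by it preserves norms.
Applying Grönwall to `s ↦ exp (-s A) exp (s (A + H)) - 1`, whose derivative is
`exp (-s A) H exp (s (A + H))`, gives `‖exp (A + H) - exp A‖ ≤ e^‖H‖ - 1`, hence
`‖D exp (A)‖ ≤ 1`, and the chain rule gives `‖D (exp ∘ χ) x‖ ≤ ‖D χ x‖`.
-/

open scoped Matrix.Norms.L2Operator
open NormedSpace

theorem gronwallBound_zero_self (K x : ℝ) : gronwallBound 0 K K x = Real.exp (K * x) - 1 := by
  rcases eq_or_ne K 0 with rfl | hK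
  · simp [gronwallBound_K0]
  · simp [gronwallBound_of_K_ne_0 hK, div_self hK]

section CStarAlgebra

variable {𝔸 : Type*} [NormedRing 𝔸] [StarRing 𝔸] [CStarRing 𝔸]

theorem CStarRing.norm_one_le : ‖(1 : 𝔸)‖ ≤ 1 := by
  rcases subsingleton_or_nontrivial 𝔸 with h | h
  · simp [Subsingleton.elim (1 : 𝔸) 0]
  · exact CStarRing.norm_one.le

variable [NormedAlgebra ℝ 𝔸] [StarModule ℝ 𝔸] [CompleteSpace 𝔸]

theorem exp_smul_mem_unitary_of_mem_skewAdjoint {A : 𝔸} (hA : A ∈ skewAdjoint 𝔸) (s : ℝ) :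
    exp (s • A) ∈ unitary 𝔸 :=
  letI : NormedAlgebra ℚ 𝔸 := .restrictScalars ℚ ℝ 𝔸
  exp_mem_unitary_of_mem_skewAdjoint (skewAdjoint.smul_mem s hA)

omit [StarRing 𝔸] [CStarRing 𝔸] [StarModule ℝ 𝔸] in
theorem hasDerivAt_exp_smul_neg_mul_exp_smul (A B : 𝔸) (s : ℝ) :
    HasDerivAt (fun t : ℝ => exp (t • -A) * exp (t • B))
      (exp (s • -A) * (B - A) * exp (s • B)) s := by
  convert (hasDerivAt_exp_smul_const' (-A) s).fun_mul (hasDerivAt_exp_smul_const' B s) using 1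
  rw [(((Commute.refl (-A)).smul_right s).exp_right).eq]
  noncomm_ring

theorem norm_exp_add_sub_exp_le_of_mem_skewAdjoint {A : 𝔸} (hA : A ∈ skewAdjoint 𝔸) (H : 𝔸) :
    ‖exp (A + H) - exp A‖ ≤ Real.exp ‖H‖ - 1 := by
  let : NormedAlgebra ℚ 𝔸 := .restrictScalars ℚ ℝ 𝔸
  set F : ℝ → 𝔸 := fun t => exp (t • -A) * exp (t • (A + H))
  have hF : ∀ s, HasDerivAt F (exp (s • -A) * H * exp (s • (A + H))) s := by
    simpa only [add_sub_cancel_left] using hasDerivAt_exp_smul_neg_mul_exp_smul A (A + H)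
  have hU : ∀ s : ℝ, exp (s • -A) ∈ unitary 𝔸 :=
    exp_smul_mem_unitary_of_mem_skewAdjoint (neg_mem hA)
  have hbound : ∀ s, ‖exp (s • -A) * H * exp (s • (A + H))‖ ≤ ‖H‖ * ‖F s - 1‖ + ‖H‖ := by
    intro s
    calc ‖exp (s • -A) * H * exp (s • (A + H))‖ = ‖H * exp (s • (A + H))‖ := by
          rw [mul_assoc, CStarRing.norm_mem_unitary_mul _ (hU s)]
      _ ≤ ‖H‖ * ‖F s‖ := by
          rw [CStarRing.norm_mem_unitary_mul _ (hU s)]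
          exact norm_mul_le _ _
      _ ≤ ‖H‖ * (‖F s - 1‖ + 1) := by
          gcongr
          exact (norm_le_norm_sub_add _ 1).trans (by gcongr; exact CStarRing.norm_one_le)
      _ = ‖H‖ * ‖F s - 1‖ + ‖H‖ := by ring
  have hgronwall := norm_le_gronwallBound_of_norm_deriv_right_le (f := fun s => F s - 1)
    (δ := 0) (a := 0) (b := 1)
    (fun s _ => ((hF s).sub_const 1).continuousAt.continuousWithinAt)
    (fun s _ => ((hF s).sub_const 1).hasDerivWithinAt) (by simp [F]) (fun s _ => hbound s)
    1 (by simp)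
  have hexpA : exp A * exp (-A) = 1 := by
    rw [← exp_add_of_commute (Commute.refl A).neg_right, add_neg_cancel, exp_zero]
  calc ‖exp (A + H) - exp A‖ = ‖exp A * (F 1 - 1)‖ := by simp [F, mul_sub, ← mul_assoc, hexpA]
    _ = ‖F 1 - 1‖ := CStarRing.norm_mem_unitary_mul _ (by simpa using hU (-1))
    _ ≤ Real.exp ‖H‖ - 1 := by simpa [gronwallBound_zero_self] using hgronwall

theorem norm_fderiv_exp_le_one_of_mem_skewAdjoint {A : 𝔸} (hA : A ∈ skewAdjoint 𝔸) :
    ‖fderiv ℝ exp A‖ ≤ 1 := by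
  refine le_of_forall_pos_le_add fun ε hε =>
    (exp_analytic A).differentiableAt.hasFDerivAt.le_of_lip' (by positivity) ?_
  filter_upwards [Metric.closedBall_mem_nhds A (lt_min hε one_pos)] with B hB
  rw [mem_closedBall_iff_norm, le_min_iff] at hB
  have hexp : Real.exp ‖B - A‖ - 1 ≤ ‖B - A‖ + ‖B - A‖ ^ 2 := by
    have := Real.abs_exp_sub_one_sub_id_le (x := ‖B - A‖) (by simpa using hB.2)
    linarith [(abs_le.1 this).2]
  calc ‖exp B - exp A‖ = ‖exp (A + (B - A)) - exp A‖ := by rw [add_sub_cancel]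
    _ ≤ Real.exp ‖B - A‖ - 1 := norm_exp_add_sub_exp_le_of_mem_skewAdjoint hA _
    _ ≤ (1 + ε) * ‖B - A‖ := by nlinarith [norm_nonneg (B - A)]

theorem norm_fderiv_exp_comp_le_of_mem_skewAdjoint {E : Type*} [NormedAddCommGroup E]
    [NormedSpace ℝ E] {χ : E → 𝔸} {x : E} (hχ : DifferentiableAt ℝ χ x)
    (hx : χ x ∈ skewAdjoint 𝔸) :
    ‖fderiv ℝ (fun y => exp (χ y)) x‖ ≤ ‖fderiv ℝ χ x‖ := by
  rw [fderiv_fun_comp x (exp_analytic (χ x)).differentiableAt hχ]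
  calc ‖(fderiv ℝ exp (χ x)).comp (fderiv ℝ χ x)‖ ≤ ‖fderiv ℝ exp (χ x)‖ * ‖fderiv ℝ χ x‖ :=
        ContinuousLinearMap.opNorm_comp_le _ _
    _ ≤ ‖fderiv ℝ χ x‖ := mul_le_of_le_one_left (norm_nonneg _)
        (norm_fderiv_exp_le_one_of_mem_skewAdjoint hx)

end CStarAlgebra

/-- Pointwise derivative estimate for the exponential of a matrix-valued map (cf. Lemma 7.1 (1)
of the paper): if `χ` is differentiable at `x` and `χ x` is skew-Hermitian, then
`exp ∘ χ` is differentiable at `x` and `‖D(exp ∘ χ)(x)‖ ≤ (1 + ‖χ x‖) ‖Dχ(x)‖`. -/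
theorem fderiv_exp_comp_estimate_skewHermitian
    (n : ℕ) (χ : EuclideanSpace ℝ (Fin 4) → Matrix (Fin n) (Fin n) ℂ)
    (x : EuclideanSpace ℝ (Fin 4)) (hχ : DifferentiableAt ℝ χ x)
    (hskew : (χ x).conjTranspose = -(χ x)) :
    DifferentiableAt ℝ (fun y => NormedSpace.exp (χ y)) x ∧
    ‖fderiv ℝ (fun y => NormedSpace.exp (χ y)) x‖ ≤ (1 + ‖χ x‖) * ‖fderiv ℝ χ x‖ := by
  refine ⟨(exp_analytic (χ x)).differentiableAt.comp x hχ, ?_⟩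
  calc ‖fderiv ℝ (fun y => exp (χ y)) x‖ ≤ ‖fderiv ℝ χ x‖ :=
        norm_fderiv_exp_comp_le_of_mem_skewAdjoint hχ (skewAdjoint.mem_iff.2 hskew)
    _ ≤ (1 + ‖χ x‖) * ‖fderiv ℝ χ x‖ :=
        le_mul_of_one_le_left (norm_nonneg _) (le_add_of_nonneg_right (norm_nonneg _))
end

section
/- Let u : ℝ⁴ → ℝ^m be a smooth compactly supported map. Then ‖∇u‖_{L⁴(ℝ⁴)}² ≤ ‖u‖_{C⁰(ℝ⁴)} · ( ‖Δu‖_{L²(ℝ⁴)} + 2 ‖∇²u‖_{L²(ℝ⁴)} ), where ∇u is the total derivative, ∇²u the second derivative (Hessian), Δu the componentwise Laplacian (trace of the Hessian of each component), all norms on the pointwise values being Euclidean (Frobenius) norms, ‖u‖_{C⁰} = sup_{x ∈ ℝ⁴} |u(x)|, and ‖·‖_{L^p} the usual Lebesgue norms. -/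
set_option maxHeartbeats 2000000

open MeasureTheory
open scoped RealInnerProductSpace

private lemma hcs_inner_left {α : Type*} [TopologicalSpace α] {F : Type*} [NormedAddCommGroup F]
    [InnerProductSpace ℝ F] {f g : α → F} (hf : HasCompactSupport f) :
    HasCompactSupport (fun x => (inner ℝ (f x) (g x) : ℝ)) := by
  apply hf.mono
  intro x hx
  simp only [Function.mem_support] at hx ⊢
  intro h
  exact hx (by simp [h])

private lemma hcs_inner_right {α : Type*} [TopologicalSpace α] {F : Type*} [NormedAddCommGroup F]
    [InnerProductSpace ℝ F] {f g : α → F} (hg : HasCompactSupport g) :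
    HasCompactSupport (fun x => (inner ℝ (f x) (g x) : ℝ)) := by
  apply hg.mono
  intro x hx
  simp only [Function.mem_support] at hx ⊢
  intro h
  exact hx (by simp [h])

private lemma hcs_mul_left {α : Type*} [TopologicalSpace α] {f g : α → ℝ}
    (hf : HasCompactSupport f) :
    HasCompactSupport (fun x => f x * g x) := by
  apply hf.mono
  intro x hx
  simp only [Function.mem_support] at hx ⊢
  intro h
  exact hx (by simp [h])

private lemma hcs_comp {α β γ : Type*} [TopologicalSpace α] [Zero β] [Zero γ]
    {f : α → β} (hf : HasCompactSupport f) (g : β → γ) (hg : g 0 = 0) :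
    HasCompactSupport (fun x => g (f x)) :=
  hf.comp_left hg

/-- Interpolation estimate (Lemma 4.6 (2) of the paper, Euclidean model case): for a smooth
compactly supported `u : ℝ⁴ → ℝᵐ`,
`‖∇u‖_{L⁴}² ≤ ‖u‖_{C⁰} (‖Δu‖_{L²} + 2 ‖∇²u‖_{L²})`,
where pointwise norms of the derivatives are Euclidean (Frobenius) norms. -/
theorem gradient_L4_interpolation_estimate
    (m : ℕ) (u : EuclideanSpace ℝ (Fin 4) → EuclideanSpace ℝ (Fin m))
    (hu : ContDiff ℝ (⊤ : ℕ∞) u) (hsupp : HasCompactSupport u) :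
    -- pointwise Frobenius norm of the first derivative
    (∫ x, (Real.sqrt (∑ i : Fin 4,
        ‖fderiv ℝ u x (EuclideanSpace.single i 1)‖ ^ 2)) ^ 4) ^ ((1 : ℝ) / 2) ≤
      (⨆ x, ‖u x‖) *
        ((∫ x, ‖∑ i : Fin 4, iteratedFDeriv ℝ 2 u x
            ![EuclideanSpace.single i 1, EuclideanSpace.single i 1]‖ ^ 2) ^ ((1 : ℝ) / 2) +
          2 * (∫ x, (Real.sqrt (∑ i : Fin 4, ∑ j : Fin 4,
            ‖iteratedFDeriv ℝ 2 u x
              ![EuclideanSpace.single i 1, EuclideanSpace.single j 1]‖ ^ 2)) ^ 2) ^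
            ((1 : ℝ) / 2)) := by
  classical
  set e : Fin 4 → EuclideanSpace ℝ (Fin 4) := fun i => EuclideanSpace.single i 1 with he
  set V : EuclideanSpace ℝ (Fin 4) → EuclideanSpace ℝ (Fin 4) →L[ℝ] EuclideanSpace ℝ (Fin m) :=
    fderiv ℝ u with hV
  set H := fderiv ℝ V with hH
  set ρ : EuclideanSpace ℝ (Fin 4) → ℝ := fun x => ∑ i, ‖V x (e i)‖ ^ 2 with hρ
  set Δ : EuclideanSpace ℝ (Fin 4) → EuclideanSpace ℝ (Fin m) :=
    fun x => ∑ i, H x (e i) (e i) with hΔ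
  set T : EuclideanSpace ℝ (Fin 4) → ℝ :=
    fun x => Real.sqrt (∑ i, ∑ j, ‖H x (e i) (e j)‖ ^ 2) with hT
  set C : ℝ := ⨆ x, ‖u x‖ with hC
  -- regularity facts
  have hud : Differentiable ℝ u := hu.differentiable (by simp)
  have hVcd : ContDiff ℝ (⊤ : ℕ∞) V := hu.fderiv_right (by simp)
  have hVd : Differentiable ℝ V := hVcd.differentiable (by simp)
  have hVc : Continuous V := hVcd.continuous
  have hVs : HasCompactSupport V := hsupp.fderiv (𝕜 := ℝ)
  have hHcd : ContDiff ℝ (⊤ : ℕ∞) H := hVcd.fderiv_right (by simp)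
  have hHc : Continuous H := hHcd.continuous
  have hHs : HasCompactSupport H := hVs.fderiv (𝕜 := ℝ)
  have hVicd : ∀ i, ContDiff ℝ (⊤ : ℕ∞) (fun x => V x (e i)) :=
    fun i => hVcd.clm_apply contDiff_const
  have hρcd : ContDiff ℝ (⊤ : ℕ∞) ρ := ContDiff.sum (fun i _ => (hVicd i).norm_sq ℝ)
  have hρd : Differentiable ℝ ρ := hρcd.differentiable (by simp)
  have hρnn : ∀ x, 0 ≤ ρ x := fun x => Finset.sum_nonneg fun i _ => sq_nonneg _
  have hTnn : ∀ x, 0 ≤ T x := fun x => Real.sqrt_nonneg _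
  -- the vector fields f i
  set f : Fin 4 → EuclideanSpace ℝ (Fin 4) → EuclideanSpace ℝ (Fin m) :=
    fun i x => ρ x • V x (e i) with hf
  have hfcd : ∀ i, ContDiff ℝ (⊤ : ℕ∞) (f i) := fun i => hρcd.smul (hVicd i)
  have hfd : ∀ i, Differentiable ℝ (f i) := fun i => (hfcd i).differentiable (by simp)
  -- compact supports
  have hVis : ∀ i, HasCompactSupport (fun x => V x (e i)) := fun i =>
    hcs_comp hVs (fun L => L (e i)) (by simp)
  have hρs : HasCompactSupport ρ :=
    hcs_comp hVs (fun L => ∑ i, ‖L (e i)‖ ^ 2) (by simp)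
  have hΔs : HasCompactSupport Δ :=
    hcs_comp hHs (fun Q => ∑ i, Q (e i) (e i)) (by simp)
  have hTs : HasCompactSupport T :=
    hcs_comp hHs (fun Q => Real.sqrt (∑ i, ∑ j, ‖Q (e i) (e j)‖ ^ 2)) (by simp)
  have hfs : ∀ i, HasCompactSupport (f i) := by
    intro i
    apply (hVis i).mono
    intro x hx
    simp only [Function.mem_support] at hx ⊢
    intro h
    exact hx (by simp [hf, h])
  -- continuity facts
  have hΔc : Continuous Δ := by
    apply continuous_finset_sum
    intro i _
    exact (hHc.clm_apply continuous_const).clm_apply continuous_const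
  have hρc : Continuous ρ := hρcd.continuous
  have hTc : Continuous T := by
    apply Real.continuous_sqrt.comp
    apply continuous_finset_sum; intro i _
    apply continuous_finset_sum; intro j _
    exact ((hHc.clm_apply continuous_const).clm_apply continuous_const).norm.pow 2
  -- sup bound
  have hbdd : BddAbove (Set.range fun x => ‖u x‖) :=
    hu.continuous.norm.bddAbove_range_of_hasCompactSupport hsupp.norm
  have hCle : ∀ x, ‖u x‖ ≤ C := fun x => le_ciSup hbdd x
  have hC0 : 0 ≤ C := le_trans (norm_nonneg _) (hCle 0)
  -- derivative computations
  have hVi' : ∀ i x, HasFDerivAt (fun y => V y (e i)) ((H x).flip (e i)) x := by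
    intro i x
    have := ((hVd x).hasFDerivAt).clm_apply (hasFDerivAt_const (e i) x)
    refine this.congr_fderiv ?_
    ext w
    simp [hH]
  have hρ' : ∀ x, HasFDerivAt ρ
      (∑ i, (2 : ℕ) • (innerSL ℝ (V x (e i))).comp ((H x).flip (e i))) x := by
    intro x
    exact HasFDerivAt.fun_sum (fun i _ => (hVi' i x).norm_sq)
  have hρ'app : ∀ x w, fderiv ℝ ρ x w = ∑ i, 2 * ⟪V x (e i), H x w (e i)⟫ := by
    intro x w
    rw [(hρ' x).fderiv]
    simp
  have hf' : ∀ i x, HasFDerivAt (f i)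
      (ρ x • (H x).flip (e i) + (fderiv ℝ ρ x).smulRight (V x (e i))) x :=
    fun i x => ((hρd x).hasFDerivAt).smul (hVi' i x)
  have hfix : ∀ i x, fderiv ℝ (f i) x (e i)
      = ρ x • H x (e i) (e i) + (fderiv ℝ ρ x (e i)) • V x (e i) := by
    intro i x
    rw [(hf' i x).fderiv]
    simp
  -- integrability
  have int1 : ∀ i, Integrable (fun x => (⟪f i x, V x (e i)⟫ : ℝ)) := by
    intro i
    exact (Continuous.inner ((hfcd i).continuous) (hVc.clm_apply continuous_const)).integrable_of_hasCompactSupport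
      (hcs_inner_left (hfs i))
  have hfderivC : ∀ i, Continuous (fun x => fderiv ℝ (f i) x (e i)) := by
    intro i
    have : ContDiff ℝ (⊤ : ℕ∞) (fderiv ℝ (f i)) := (hfcd i).fderiv_right (by simp)
    exact this.continuous.clm_apply continuous_const
  have int2 : ∀ i, Integrable (fun x => (⟪fderiv ℝ (f i) x (e i), u x⟫ : ℝ)) := by
    intro i
    exact (Continuous.inner (hfderivC i) hu.continuous).integrable_of_hasCompactSupport
      (hcs_inner_right hsupp)
  have int3 : ∀ i, Integrable (fun x => (⟪f i x, u x⟫ : ℝ)) := by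
    intro i
    exact (Continuous.inner ((hfcd i).continuous) hu.continuous).integrable_of_hasCompactSupport
      (hcs_inner_right hsupp)
  have int4 : Integrable (fun x => ρ x * ‖Δ x‖) :=
    (hρc.mul hΔc.norm).integrable_of_hasCompactSupport (hcs_mul_left hρs)
  have int5 : Integrable (fun x => ρ x * T x) :=
    (hρc.mul hTc).integrable_of_hasCompactSupport (hcs_mul_left hρs)
  -- integration by parts, for each direction i
  have ibp : ∀ i, ∫ x, (⟪f i x, V x (e i)⟫ : ℝ) = - ∫ x, (⟪fderiv ℝ (f i) x (e i), u x⟫ : ℝ) := by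
    intro i
    exact integral_bilinear_fderiv_right_eq_neg_left_of_integrable (B := innerSL ℝ)
      (int2 i) (int1 i) (int3 i) (fun x _ => hfd i x) (fun x _ => hud x)
  -- step 1 : ∫ ρ² = ∑ i ∫ ⟪f i, V_i⟫
  have step1 : ∫ x, ρ x ^ 2 = ∑ i, ∫ x, (⟪f i x, V x (e i)⟫ : ℝ) := by
    rw [← integral_finset_sum _ (fun i _ => int1 i)]
    congr 1
    funext x
    have : ∀ i : Fin 4, (⟪f i x, V x (e i)⟫ : ℝ) = ρ x * ‖V x (e i)‖ ^ 2 := by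
      intro i
      rw [hf]
      simp only [real_inner_smul_left]
      rw [real_inner_self_eq_norm_sq]
    simp only [this, ← Finset.mul_sum]
    simp only [hρ]
    ring
  -- pointwise bound on the divergence term
  have pointwise : ∀ x, ‖∑ i, fderiv ℝ (f i) x (e i)‖ ≤ ρ x * ‖Δ x‖ + 2 * (ρ x * T x) := by
    intro x
    have hsplit : ∑ i, fderiv ℝ (f i) x (e i)
        = ρ x • Δ x + ∑ i, (fderiv ℝ ρ x (e i)) • V x (e i) := by
      simp only [hfix]
      rw [Finset.sum_add_distrib, hΔ, Finset.smul_sum]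
    rw [hsplit]
    refine le_trans (norm_add_le _ _) ?_
    have h1 : ‖ρ x • Δ x‖ = ρ x * ‖Δ x‖ := by
      rw [norm_smul, Real.norm_of_nonneg (hρnn x)]
    rw [h1]
    gcongr
    refine le_trans (norm_sum_le _ _) ?_
    have h2 : ∀ i : Fin 4, ‖(fderiv ℝ ρ x (e i)) • V x (e i)‖
        ≤ ∑ j, 2 * (‖V x (e i)‖ * ‖V x (e j)‖ * ‖H x (e i) (e j)‖) := by
      intro i
      rw [norm_smul]
      rw [hρ'app]
      calc ‖∑ j, 2 * ⟪V x (e j), H x (e i) (e j)⟫‖ * ‖V x (e i)‖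
          ≤ (∑ j, 2 * (‖V x (e j)‖ * ‖H x (e i) (e j)‖)) * ‖V x (e i)‖ := by
            gcongr
            refine le_trans (norm_sum_le _ _) ?_
            apply Finset.sum_le_sum
            intro j _
            rw [norm_mul]
            simp only [Real.norm_ofNat]
            gcongr
            exact norm_inner_le_norm _ _
        _ = ∑ j, 2 * (‖V x (e i)‖ * ‖V x (e j)‖ * ‖H x (e i) (e j)‖) := by
            rw [Finset.sum_mul]
            congr 1
            funext j
            ring
    refine le_trans (Finset.sum_le_sum fun i _ => h2 i) ?_
    -- Cauchy-Schwarz over pairs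
    have hCS : ∑ i : Fin 4, ∑ j : Fin 4, ‖V x (e i)‖ * ‖V x (e j)‖ * ‖H x (e i) (e j)‖
        ≤ ρ x * T x := by
      have key := Finset.sum_mul_sq_le_sq_mul_sq Finset.univ
        (fun p : Fin 4 × Fin 4 => ‖V x (e p.1)‖ * ‖V x (e p.2)‖)
        (fun p : Fin 4 × Fin 4 => ‖H x (e p.1) (e p.2)‖)
      have hL : ∑ p : Fin 4 × Fin 4, (‖V x (e p.1)‖ * ‖V x (e p.2)‖) * ‖H x (e p.1) (e p.2)‖
          = ∑ i : Fin 4, ∑ j : Fin 4, ‖V x (e i)‖ * ‖V x (e j)‖ * ‖H x (e i) (e j)‖ := by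
        rw [← Finset.sum_product']
        rfl
      have hF : ∑ p : Fin 4 × Fin 4, (‖V x (e p.1)‖ * ‖V x (e p.2)‖) ^ 2 = ρ x ^ 2 := by
        have : ∑ p : Fin 4 × Fin 4, (‖V x (e p.1)‖ * ‖V x (e p.2)‖) ^ 2
            = ∑ i : Fin 4, ∑ j : Fin 4, ‖V x (e i)‖ ^ 2 * ‖V x (e j)‖ ^ 2 := by
          rw [← Finset.sum_product']
          apply Finset.sum_congr rfl
          intro p _
          ring
        rw [this, hρ, sq, Finset.sum_mul_sum]
      have hG : ∑ p : Fin 4 × Fin 4, (‖H x (e p.1) (e p.2)‖) ^ 2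
          = ∑ i : Fin 4, ∑ j : Fin 4, ‖H x (e i) (e j)‖ ^ 2 := by
        rw [← Finset.sum_product']
        rfl
      rw [hL, hF, hG] at key
      have hsum_nn : 0 ≤ ∑ i : Fin 4, ∑ j : Fin 4, ‖V x (e i)‖ * ‖V x (e j)‖ * ‖H x (e i) (e j)‖ :=
        Finset.sum_nonneg fun i _ => Finset.sum_nonneg fun j _ => by positivity
      have hTx : (T x) ^ 2 = ∑ i : Fin 4, ∑ j : Fin 4, ‖H x (e i) (e j)‖ ^ 2 :=
        Real.sq_sqrt (Finset.sum_nonneg fun i _ => Finset.sum_nonneg fun j _ => sq_nonneg _)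
      rw [← hTx] at key
      nlinarith [key, hsum_nn, hρnn x, hTnn x, mul_nonneg (hρnn x) (hTnn x)]
    calc ∑ i : Fin 4, ∑ j, 2 * (‖V x (e i)‖ * ‖V x (e j)‖ * ‖H x (e i) (e j)‖)
        = 2 * ∑ i : Fin 4, ∑ j, ‖V x (e i)‖ * ‖V x (e j)‖ * ‖H x (e i) (e j)‖ := by
          rw [Finset.mul_sum]
          congr 1; funext i; rw [Finset.mul_sum]
      _ ≤ 2 * (ρ x * T x) := by linarith
  -- step 2 : combine IBP and the bound
  have step2 : ∫ x, ρ x ^ 2 ≤ ∫ x, C * (ρ x * ‖Δ x‖ + 2 * (ρ x * T x)) := by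
    rw [step1]
    have : ∑ i, ∫ x, (⟪f i x, V x (e i)⟫ : ℝ)
        = ∫ x, ∑ i, -(⟪fderiv ℝ (f i) x (e i), u x⟫ : ℝ) := by
      refine Eq.trans (Finset.sum_congr rfl fun i _ => ibp i) ?_
      simp only [← integral_neg]
      exact (integral_finset_sum _ (fun i _ => (int2 i).neg)).symm
    rw [this]
    apply integral_mono
    · exact integrable_finset_sum _ (fun i _ => (int2 i).neg)
    · exact (int4.add (int5.const_mul 2)).const_mul C
    intro x
    show ∑ i, -(⟪fderiv ℝ (f i) x (e i), u x⟫ : ℝ) ≤ C * (ρ x * ‖Δ x‖ + 2 * (ρ x * T x))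
    have h1 : ∑ i, -(⟪fderiv ℝ (f i) x (e i), u x⟫ : ℝ)
        = -(⟪∑ i, fderiv ℝ (f i) x (e i), u x⟫ : ℝ) := by
      rw [sum_inner]
      exact Finset.sum_neg_distrib _
    rw [h1]
    have hb1 : -(⟪∑ i, fderiv ℝ (f i) x (e i), u x⟫ : ℝ)
        ≤ ‖∑ i, fderiv ℝ (f i) x (e i)‖ * ‖u x‖ :=
      le_trans (neg_le_abs _) (abs_real_inner_le_norm _ _)
    have hb2 : ‖∑ i, fderiv ℝ (f i) x (e i)‖ * ‖u x‖
        ≤ (ρ x * ‖Δ x‖ + 2 * (ρ x * T x)) * C := by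
      exact mul_le_mul (pointwise x) (hCle x) (norm_nonneg _)
        (add_nonneg (mul_nonneg (hρnn x) (norm_nonneg _))
          (mul_nonneg (by norm_num) (mul_nonneg (hρnn x) (hTnn x))))
    have hb3 : (ρ x * ‖Δ x‖ + 2 * (ρ x * T x)) * C
        = C * (ρ x * ‖Δ x‖ + 2 * (ρ x * T x)) := mul_comm _ _
    linarith
  -- step 3 : split the right-hand side
  have step3 : ∫ x, C * (ρ x * ‖Δ x‖ + 2 * (ρ x * T x))
      = C * ((∫ x, ρ x * ‖Δ x‖) + 2 * ∫ x, ρ x * T x) := by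
    rw [integral_const_mul]
    congr 1
    rw [integral_add int4 (int5.const_mul 2), integral_const_mul]
  -- Hölder (Cauchy-Schwarz in L²)
  have hconj : Real.HolderConjugate 2 2 := Real.HolderConjugate.two_two
  have hofReal2 : ENNReal.ofReal (2 : ℝ) = 2 := by
    rw [ENNReal.ofReal_ofNat]
  have memρ : MemLp ρ (ENNReal.ofReal 2) := by
    rw [hofReal2]; exact hρc.memLp_of_hasCompactSupport hρs
  have memΔ : MemLp (fun x => ‖Δ x‖) (ENNReal.ofReal 2) := by
    rw [hofReal2]; exact hΔc.norm.memLp_of_hasCompactSupport hΔs.norm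
  have memT : MemLp T (ENNReal.ofReal 2) := by
    rw [hofReal2]; exact hTc.memLp_of_hasCompactSupport hTs
  have hold1 : ∫ x, ρ x * ‖Δ x‖
      ≤ (∫ x, ρ x ^ 2) ^ ((1:ℝ)/2) * (∫ x, ‖Δ x‖ ^ 2) ^ ((1:ℝ)/2) := by
    have := integral_mul_le_Lp_mul_Lq_of_nonneg hconj
      (Filter.Eventually.of_forall hρnn)
      (Filter.Eventually.of_forall fun x => norm_nonneg (Δ x)) memρ memΔ
    simpa only [Real.rpow_two] using this
  have hold2 : ∫ x, ρ x * T x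
      ≤ (∫ x, ρ x ^ 2) ^ ((1:ℝ)/2) * (∫ x, T x ^ 2) ^ ((1:ℝ)/2) := by
    have := integral_mul_le_Lp_mul_Lq_of_nonneg hconj
      (Filter.Eventually.of_forall hρnn)
      (Filter.Eventually.of_forall hTnn) memρ memT
    simpa only [Real.rpow_two] using this
  -- abbreviations for the L² quantities
  set A : ℝ := (∫ x, ρ x ^ 2) ^ ((1:ℝ)/2) with hA
  set D : ℝ := (∫ x, ‖Δ x‖ ^ 2) ^ ((1:ℝ)/2) with hD
  set Tt : ℝ := (∫ x, T x ^ 2) ^ ((1:ℝ)/2) with hTt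
  have hI0 : 0 ≤ ∫ x, ρ x ^ 2 := integral_nonneg fun x => sq_nonneg _
  have hAnn : 0 ≤ A := Real.rpow_nonneg hI0 _
  have hDnn : 0 ≤ D := Real.rpow_nonneg (integral_nonneg fun x => sq_nonneg _) _
  have hTtnn : 0 ≤ Tt := Real.rpow_nonneg (integral_nonneg fun x => sq_nonneg _) _
  have hAA : A * A = ∫ x, ρ x ^ 2 := by
    rw [hA, ← Real.rpow_add' hI0 (by norm_num)]
    norm_num
  have main : A * A ≤ C * (D + 2 * Tt) * A := by
    rw [hAA]
    calc ∫ x, ρ x ^ 2 ≤ ∫ x, C * (ρ x * ‖Δ x‖ + 2 * (ρ x * T x)) := step2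
      _ = C * ((∫ x, ρ x * ‖Δ x‖) + 2 * ∫ x, ρ x * T x) := step3
      _ ≤ C * (A * D + 2 * (A * Tt)) := by
          apply mul_le_mul_of_nonneg_left _ hC0
          have h2 : (∫ x, ρ x * T x) ≤ A * Tt := hold2
          have h1 : (∫ x, ρ x * ‖Δ x‖) ≤ A * D := hold1
          linarith
      _ = C * (D + 2 * Tt) * A := by ring
  have final : A ≤ C * (D + 2 * Tt) := by
    rcases eq_or_lt_of_le hAnn with h0 | hpos
    · rw [← h0]
      positivity
    · exact le_of_mul_le_mul_right (by linarith [main]) hpos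
  -- convert the goal to the abbreviated form
  have eL : ∫ x, (Real.sqrt (∑ i : Fin 4, ‖V x (EuclideanSpace.single i 1)‖ ^ 2)) ^ 4
      = ∫ x, ρ x ^ 2 := by
    congr 1
    funext x
    have hnn : (0:ℝ) ≤ ∑ i : Fin 4, ‖V x (EuclideanSpace.single i 1)‖ ^ 2 :=
      Finset.sum_nonneg fun i _ => sq_nonneg _
    have h4 : (Real.sqrt (∑ i : Fin 4, ‖V x (EuclideanSpace.single i 1)‖ ^ 2)) ^ 4
        = ((Real.sqrt (∑ i : Fin 4, ‖V x (EuclideanSpace.single i 1)‖ ^ 2)) ^ 2) ^ 2 := by ring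
    rw [h4, Real.sq_sqrt hnn, hρ]
  have eΔ : ∫ x, ‖∑ i : Fin 4, iteratedFDeriv ℝ 2 u x
      ![EuclideanSpace.single i 1, EuclideanSpace.single i 1]‖ ^ 2 = ∫ x, ‖Δ x‖ ^ 2 := by
    congr 1
    funext x
    rw [hΔ]
    simp [iteratedFDeriv_two_apply, he, hH, hV]
  have eT : ∫ x, (Real.sqrt (∑ i : Fin 4, ∑ j : Fin 4, ‖iteratedFDeriv ℝ 2 u x
      ![EuclideanSpace.single i 1, EuclideanSpace.single j 1]‖ ^ 2)) ^ 2 = ∫ x, T x ^ 2 := by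
    congr 1
    funext x
    rw [hT]
    simp only [iteratedFDeriv_two_apply, Matrix.cons_val_zero, Matrix.cons_val_one,
      Matrix.head_cons, he, hH, hV]
  rw [eL, eΔ, eT]
  exact final
end
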